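/- Let S be a complete and decomposable SPN with positive edge weights w and fixed input x. Define node derivative values D_v(x|w) top-down by: D_v = 1 when v is the root of S, and otherwise D_v(x|w) = (sum over sum-node parents u of v of w_{uv} D_u(x|w)) + (sum over product-node parents u of v of D_u(x|w) times the product over children h of u with h not equal to v of f_h(x|w)). Then for every sum node v_i and every child v_j of v_i, the partial derivative of the network polynomial with respect to the weight w_{ij}, viewing f_S(x|w) as a function of the weight vector w, satisfies d f_S(x|w) / d w_{ij} = D_{v_i}(x|w) times f_{v_j}(x|w). -/

import Mathlib

inductive NodeKind
  | sum
  | prod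
  | leaf
deriving DecidableEq

/-- A sum-product network over `N` Boolean variables, with node set `V`:
a rooted DAG (acyclicity witnessed by a rank function) whose leaves are
indicator variables and whose internal nodes are sum or product nodes. -/
structure SPN (V : Type) [Fintype V] [DecidableEq V] (N : ℕ) where
  root : V
  kind : V → NodeKind
  children : V → Finset V
  leaf_children : ∀ v, kind v = NodeKind.leaf → children v = ∅
  internal_nonempty : ∀ v, kind v ≠ NodeKind.leaf → (children v).Nonempty
  root_no_parent : ∀ u, root ∉ children u
  leafVar : V → Fin N
  leafSign : V → Bool
  rank : V → ℕ
  rank_lt : ∀ v, ∀ u ∈ children v, rank u < rank v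

namespace SPN

variable {V : Type} [Fintype V] [DecidableEq V] {N : ℕ}

/-- The value `f_v(·|w)` of every node, where `w` assigns a weight to every
edge `(v,u)` out of a sum node and `L` gives the value of every leaf. -/
noncomputable def evalWith (S : SPN V N) (w : V × V → ℝ) (L : V → ℝ) (v : V) : ℝ :=
  match S.kind v with
  | NodeKind.leaf => L v
  | NodeKind.sum => ∑ u ∈ (S.children v).attach, w (v, u.1) * S.evalWith w L u.1
  | NodeKind.prod => ∏ u ∈ (S.children v).attach, S.evalWith w L u.1
termination_by S.rank v
decreasing_by
  · exact S.rank_lt v u.1 u.2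
  · exact S.rank_lt v u.1 u.2

/-- The leaf values determined by an input `x ∈ {0,1}^N`: the leaf over
variable `X_n` is the indicator `I[x_n = leafSign]`. -/
def ind (S : SPN V N) (x : Fin N → Bool) (v : V) : ℝ :=
  if x (S.leafVar v) = S.leafSign v then 1 else 0

/-- The scope of a node: its variable at a leaf, the union of the scopes of
the children at an internal node. -/
noncomputable def scope (S : SPN V N) (v : V) : Finset (Fin N) :=
  match S.kind v with
  | NodeKind.leaf => {S.leafVar v}
  | NodeKind.sum => (S.children v).attach.sup fun u => S.scope u.1
  | NodeKind.prod => (S.children v).attach.sup fun u => S.scope u.1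
termination_by S.rank v
decreasing_by
  · exact S.rank_lt v u.1 u.2
  · exact S.rank_lt v u.1 u.2

/-- An SPN is complete if all children of every sum node have the same scope. -/
def Complete (S : SPN V N) : Prop :=
  ∀ v, S.kind v = NodeKind.sum →
    ∀ u₁ ∈ S.children v, ∀ u₂ ∈ S.children v, S.scope u₁ = S.scope u₂

/-- An SPN is decomposable if the children of every product node have
pairwise disjoint scopes. -/
def Decomposable (S : SPN V N) : Prop :=
  ∀ v, S.kind v = NodeKind.prod →
    ∀ u₁ ∈ S.children v, ∀ u₂ ∈ S.children v, u₁ ≠ u₂ →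
      Disjoint (S.scope u₁) (S.scope u₂)

/-- `(TV, TE)` is an induced SPN (induced tree) of `S`: a subgraph of `S`,
generated from the root, containing exactly one child of every sum node it
contains and all children of every product node it contains, together with
the corresponding edges. -/
structure IsInducedTree (S : SPN V N) (TV : Finset V) (TE : Finset (V × V)) : Prop where
  root_mem : S.root ∈ TV
  edges_sub : ∀ e ∈ TE, e.1 ∈ TV ∧ e.2 ∈ TV ∧ e.2 ∈ S.children e.1
  reach : ∀ v ∈ TV, v ≠ S.root → ∃ u, (u, v) ∈ TE
  sum_unique : ∀ v ∈ TV, S.kind v = NodeKind.sum → ∃! u, u ∈ S.children v ∧ u ∈ TV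
  sum_edge : ∀ v ∈ TV, S.kind v = NodeKind.sum → ∀ u ∈ S.children v, u ∈ TV → (v, u) ∈ TE
  prod_mem : ∀ v ∈ TV, S.kind v = NodeKind.prod → ∀ u ∈ S.children v, u ∈ TV
  prod_edge : ∀ v ∈ TV, S.kind v = NodeKind.prod → ∀ u ∈ S.children v, (v, u) ∈ TE

end SPN

/-! Differentiating the network bottom-up (forward mode) gives the vector `d` of derivatives of
all node values in `w (vi, vj)`; it satisfies `d = M d + f_{vj} e_{vi}`, where `M` is the
Jacobian of every node in its children. The top-down recursion for `Dv` says `Dv M = Dv` except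
at the root, where `(Dv M)_root = 0` because the root has no parent. Pairing the two,
`Dv ⬝ d = (Dv M) ⬝ d + Dv_{vi} f_{vj}`, so `Dv_root d_root = Dv_{vi} f_{vj}` with `Dv_root = 1`.
-/

open Matrix

theorem Matrix.apply_mul_apply_eq_dotProduct_of_vecMul_eq_update {ι R : Type*} [Fintype ι]
    [DecidableEq ι] [NonUnitalRing R] {M : Matrix ι ι R} {d b D : ι → R} {r : ι}
    (hd : d = M *ᵥ d + b) (hD : D ᵥ* M = Function.update D r 0) :
    D r * d r = D ⬝ᵥ b := by
  have hsplit : D = Function.update D r 0 + Pi.single r (D r) := by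
    ext i
    rcases eq_or_ne i r with rfl | hi <;> simp [*]
  have hleft : D ⬝ᵥ d = Function.update D r 0 ⬝ᵥ d + D r * d r := by
    conv_lhs => rw [hsplit]
    rw [add_dotProduct, single_dotProduct]
  have hright : D ⬝ᵥ d = Function.update D r 0 ⬝ᵥ d + D ⬝ᵥ b := by
    conv_lhs => rw [hd]
    rw [dotProduct_add, dotProduct_mulVec, hD]
  exact add_left_cancel (hleft.symm.trans hright)

namespace SPN

variable {V : Type} [Fintype V] [DecidableEq V] {N : ℕ} (S : SPN V N) {w : V × V → ℝ}
  {L : V → ℝ}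

lemma evalWith_of_leaf {v : V} (h : S.kind v = .leaf) : S.evalWith w L v = L v := by
  rw [evalWith, h]

lemma evalWith_of_sum {v : V} (h : S.kind v = .sum) :
    S.evalWith w L v = ∑ u ∈ S.children v, w (v, u) * S.evalWith w L u := by
  rw [evalWith, h]
  exact Finset.sum_attach _ fun u => w (v, u) * S.evalWith w L u

lemma evalWith_of_prod {v : V} (h : S.kind v = .prod) :
    S.evalWith w L v = ∏ u ∈ S.children v, S.evalWith w L u := by
  rw [evalWith, h]
  exact Finset.prod_attach _ _

noncomputable def tangent (S : SPN V N) (w : V × V → ℝ) (L : V → ℝ) (e : V × V) (v : V) :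
    ℝ :=
  match S.kind v with
  | .leaf => 0
  | .sum => ∑ u ∈ (S.children v).attach,
      ((Pi.single e 1 : V × V → ℝ) (v, u.1) * S.evalWith w L u.1 +
        w (v, u.1) * S.tangent w L e u.1)
  | .prod => ∑ u ∈ (S.children v).attach,
      (∏ h ∈ (S.children v).erase u.1, S.evalWith w L h) * S.tangent w L e u.1
termination_by S.rank v
decreasing_by
  · exact S.rank_lt v u.1 u.2
  · exact S.rank_lt v u.1 u.2

lemma tangent_of_leaf (e : V × V) {v : V} (h : S.kind v = .leaf) : S.tangent w L e v = 0 := by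
  rw [tangent, h]

lemma tangent_of_sum (e : V × V) {v : V} (h : S.kind v = .sum) :
    S.tangent w L e v = ∑ u ∈ S.children v,
      ((Pi.single e 1 : V × V → ℝ) (v, u) * S.evalWith w L u +
        w (v, u) * S.tangent w L e u) := by
  rw [tangent, h]
  exact Finset.sum_attach _ fun u =>
    (Pi.single e 1 : V × V → ℝ) (v, u) * S.evalWith w L u + w (v, u) * S.tangent w L e u

lemma tangent_of_prod (e : V × V) {v : V} (h : S.kind v = .prod) :
    S.tangent w L e v = ∑ u ∈ S.children v,
      (∏ h ∈ (S.children v).erase u, S.evalWith w L h) * S.tangent w L e u := by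
  rw [tangent, h]
  exact Finset.sum_attach _ fun u => (∏ h ∈ (S.children v).erase u, S.evalWith w L h) *
    S.tangent w L e u

theorem hasDerivAt_evalWith_update (e : V × V) (v : V) :
    HasDerivAt (fun t => S.evalWith (Function.update w e t) L v) (S.tangent w L e v) (w e) := by
  have ih : ∀ u ∈ S.children v,
      HasDerivAt (fun t => S.evalWith (Function.update w e t) L u) (S.tangent w L e u) (w e) :=
    fun u _ => hasDerivAt_evalWith_update e u
  cases hk : S.kind v with
  | leaf =>
    simp only [S.evalWith_of_leaf hk, S.tangent_of_leaf e hk]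
    exact hasDerivAt_const _ _
  | sum =>
    simp only [S.evalWith_of_sum hk, S.tangent_of_sum e hk]
    refine HasDerivAt.fun_sum fun u hu => ?_
    have hweight := hasDerivAt_pi.1 (hasDerivAt_update w e (w e)) (v, u)
    simpa only [Function.update_eq_self] using hweight.fun_mul (ih u hu)
  | prod =>
    simp only [S.evalWith_of_prod hk, S.tangent_of_prod e hk]
    simpa only [Function.update_eq_self, smul_eq_mul] using HasDerivAt.fun_finsetProd ih
termination_by S.rank v
decreasing_by exact S.rank_lt v u ‹_›

/-- `localJacobian u c = ∂f_u / ∂f_c`. -/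
noncomputable def localJacobian (S : SPN V N) (w : V × V → ℝ) (L : V → ℝ) : Matrix V V ℝ :=
  fun u c =>
    if c ∈ S.children u then
      match S.kind u with
      | .sum => w (u, c)
      | .prod => ∏ h ∈ (S.children u).erase c, S.evalWith w L h
      | .leaf => 0
    else 0

lemma localJacobian_mulVec_apply (g : V → ℝ) (u : V) :
    (S.localJacobian w L *ᵥ g) u = ∑ c ∈ S.children u, S.localJacobian w L u c * g c :=
  (Finset.sum_subset (Finset.subset_univ _) fun c _ hc => by simp [localJacobian, hc]).symm

lemma vecMul_localJacobian_apply (D : V → ℝ) (c : V) :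
    (D ᵥ* S.localJacobian w L) c =
      (∑ u ∈ Finset.univ.filter (fun u => S.kind u = .sum ∧ c ∈ S.children u),
        w (u, c) * D u) +
      ∑ u ∈ Finset.univ.filter (fun u => S.kind u = .prod ∧ c ∈ S.children u),
        D u * ∏ h ∈ (S.children u).erase c, S.evalWith w L h := by
  rw [Finset.sum_filter, Finset.sum_filter, ← Finset.sum_add_distrib]
  refine Finset.sum_congr rfl fun u _ => ?_
  by_cases hc : c ∈ S.children u
  · cases hk : S.kind u <;> simp [localJacobian, hc, hk, mul_comm]
  · simp [localJacobian, hc]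

lemma sum_single_edge_mul {vi vj : V} (hj : vj ∈ S.children vi) (g : V → ℝ) (v : V) :
    ∑ c ∈ S.children v, (Pi.single (vi, vj) 1 : V × V → ℝ) (v, c) * g c =
      (Pi.single vi (g vj) : V → ℝ) v := by
  rcases eq_or_ne v vi with rfl | hv
  · rw [Finset.sum_eq_single_of_mem vj hj fun c _ hc => by simp [hc]]
    simp
  · simp [hv]

lemma tangent_eq_localJacobian_mulVec_add {vi vj : V} (hsum : S.kind vi = .sum)
    (hj : vj ∈ S.children vi) :
    S.tangent w L (vi, vj) =
      S.localJacobian w L *ᵥ S.tangent w L (vi, vj) + Pi.single vi (S.evalWith w L vj) := by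
  funext v
  rw [Pi.add_apply, S.localJacobian_mulVec_apply]
  cases hk : S.kind v with
  | sum =>
    rw [S.tangent_of_sum _ hk, Finset.sum_add_distrib, S.sum_single_edge_mul hj, add_comm]
    congr 1
    exact Finset.sum_congr rfl fun c hc => by simp [localJacobian, hc, hk]
  | prod =>
    have hv : v ≠ vi := by rintro rfl; simp_all
    rw [S.tangent_of_prod _ hk, Pi.single_eq_of_ne hv, add_zero]
    exact Finset.sum_congr rfl fun c hc => by simp [localJacobian, hc, hk]
  | leaf =>
    have hv : v ≠ vi := by rintro rfl; simp_all
    simp [S.tangent_of_leaf _ hk, S.leaf_children v hk, hv]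

end SPN

theorem network_polynomial_partial_derivative_general
    {V : Type} [Fintype V] [DecidableEq V] {N : ℕ} (S : SPN V N)
    (w : V × V → ℝ) (x : Fin N → Bool)
    (Dv : V → ℝ)
    (hDroot : Dv S.root = 1)
    (hDrec : ∀ v, v ≠ S.root → Dv v =
      (∑ u ∈ Finset.univ.filter
          (fun u => S.kind u = NodeKind.sum ∧ v ∈ S.children u),
        w (u, v) * Dv u) +
      ∑ u ∈ Finset.univ.filter
          (fun u => S.kind u = NodeKind.prod ∧ v ∈ S.children u),
        Dv u * ∏ h ∈ (S.children u).erase v, S.evalWith w (S.ind x) h) :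
    ∀ vi vj, S.kind vi = NodeKind.sum → vj ∈ S.children vi →
      HasDerivAt
        (fun t : ℝ =>
          S.evalWith (Function.update w (vi, vj) t) (S.ind x) S.root)
        (Dv vi * S.evalWith w (S.ind x) vj) (w (vi, vj)) := by
  intro vi vj hsum hj
  have hback : Dv ᵥ* S.localJacobian w (S.ind x) = Function.update Dv S.root 0 := by
    funext c
    rw [S.vecMul_localJacobian_apply]
    rcases eq_or_ne c S.root with rfl | hc
    · simp [S.root_no_parent]
    · rw [Function.update_of_ne hc, hDrec c hc]
  have hroot := Matrix.apply_mul_apply_eq_dotProduct_of_vecMul_eq_update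
    (S.tangent_eq_localJacobian_mulVec_add hsum hj) hback
  rw [hDroot, one_mul, dotProduct_single] at hroot
  rw [← hroot]
  exact S.hasDerivAt_evalWith_update (vi, vj) S.root

/-- Let `S` be a complete and decomposable SPN with positive
edge weights `w` and fixed input `x`, and let `Dv` be the node derivative
values, defined top-down by `Dv root = 1` and, for `v ≠ root`,
`Dv v = ∑_{sum parents u} w (u,v) * Dv u +
        ∑_{product parents u} Dv u * ∏_{h ∈ children u, h ≠ v} f_h(x|w)`.
Then for every sum node `v_i` and child `v_j`, the partial derivative of the
network polynomial with respect to the weight `w (v_i, v_j)` equals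
`Dv v_i * f_{v_j}(x|w)`. -/
theorem network_polynomial_partial_derivative
    {V : Type} [Fintype V] [DecidableEq V] {N : ℕ} (S : SPN V N)
    (hC : S.Complete) (hD : S.Decomposable)
    (w : V × V → ℝ) (hw : ∀ e, 0 < w e) (x : Fin N → Bool)
    (Dv : V → ℝ)
    (hDroot : Dv S.root = 1)
    (hDrec : ∀ v, v ≠ S.root → Dv v =
      (∑ u ∈ Finset.univ.filter
          (fun u => S.kind u = NodeKind.sum ∧ v ∈ S.children u),
        w (u, v) * Dv u) +
      ∑ u ∈ Finset.univ.filter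
          (fun u => S.kind u = NodeKind.prod ∧ v ∈ S.children u),
        Dv u * ∏ h ∈ (S.children u).erase v, S.evalWith w (S.ind x) h) :
    ∀ vi vj, S.kind vi = NodeKind.sum → vj ∈ S.children vi →
      HasDerivAt
        (fun t : ℝ =>
          S.evalWith (Function.update w (vi, vj) t) (S.ind x) S.root)
        (Dv vi * S.evalWith w (S.ind x) vj) (w (vi, vj)) :=
  network_polynomial_partial_derivative_general S w x Dv hDroot hDrec
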